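/- For all 1 ≤ i, j ≤ m, all n ≥ 0 and all ξ ∈ H_n: f_{n+2}(e_i ⊗ f_{n+1}(ξ ⊗ e_j)) = f_{n+2}(f_{n+1}(e_i ⊗ ξ) ⊗ e_j). That is, the left and right creation operators commute: L_i R_j = R_j L_i as maps H_n → H_{n+2}. -/

import Mathlib

noncomputable section

open scoped InnerProductSpace Matrix ComplexOrder

/-- The `n`-fold tensor power `(ℂ^m)^{⊗n}`, realized as the space of
complex-valued functions on strings in `{1,…,m}^n`. -/
abbrev TP (m n : ℕ) : Type := EuclideanSpace ℂ (Fin n → Fin m)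

/-- The set of vectors `x ⊗ p ⊗ y` spanning `J^{(n)}`, where
`p = Σ_{i,j} a_{ij} e_i ⊗ e_j` is the Temperley–Lieb vector of `A`. -/
def TLset (m : ℕ) (A : Matrix (Fin m) (Fin m) ℂ) (n : ℕ) : Set (TP m n) :=
  { v | ∃ (i : ℕ) (hi : i + 2 ≤ n) (x : TP m i) (y : TP m (n - (i + 2))),
      v = WithLp.toLp 2 fun s => x (fun j => s ⟨j.1, by have := j.isLt; omega⟩) *
        A (s ⟨i, by omega⟩) (s ⟨i + 1, by omega⟩) *
        y (fun j => s ⟨i + 2 + j.1, by have := j.isLt; omega⟩) }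

/-- `J^{(n)}`, the degree-`n` component of the ideal generated by `p`. -/
def Jsp (m : ℕ) (A : Matrix (Fin m) (Fin m) ℂ) (n : ℕ) : Submodule ℂ (TP m n) :=
  Submodule.span ℂ (TLset m A n)

/-- `H_n`, the orthogonal complement of `J^{(n)}`. -/
def Hsp (m : ℕ) (A : Matrix (Fin m) (Fin m) ℂ) (n : ℕ) : Submodule ℂ (TP m n) :=
  (Jsp m A n)ᗮ

/-- `f_n`, the orthogonal projection of `(ℂ^m)^{⊗n}` onto `H_n`. -/
def fProj (m : ℕ) (A : Matrix (Fin m) (Fin m) ℂ) (n : ℕ) : TP m n →L[ℂ] TP m n :=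
  (Hsp m A n).subtypeL ∘L Submodule.orthogonalProjectionOnto (Hsp m A n)

/-- The matrix of an operator on `(ℂ^m)^{⊗k}` in the standard basis. -/
def matOf {m k : ℕ} (B : TP m k →L[ℂ] TP m k) :
    Matrix (Fin k → Fin m) (Fin k → Fin m) ℂ :=
  fun s t => B (EuclideanSpace.single t 1) s

/-- The ampliation `B ⊗ 1^{⊗(b-a)}` of an operator `B` on `(ℂ^m)^{⊗a}`, acting on the
first `a` tensor factors of `(ℂ^m)^{⊗b}`. -/
def ampFirst (m a b : ℕ) (h : a ≤ b) (B : TP m a →L[ℂ] TP m a) : TP m b →L[ℂ] TP m b :=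
  Matrix.toEuclideanCLM (𝕜 := ℂ)
    (Matrix.of fun s t : Fin b → Fin m =>
      if (fun j : Fin (b - a) => s ⟨a + j.1, by have := j.isLt; omega⟩)
          = (fun j : Fin (b - a) => t ⟨a + j.1, by have := j.isLt; omega⟩)
        then matOf B (fun j : Fin a => s ⟨j.1, by have := j.isLt; omega⟩)
               (fun j : Fin a => t ⟨j.1, by have := j.isLt; omega⟩)
        else 0)

/-- The ampliation `1^{⊗(b-a)} ⊗ C` of an operator `C` on `(ℂ^m)^{⊗a}`, acting on the
last `a` tensor factors of `(ℂ^m)^{⊗b}`. -/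
def ampLast (m a b : ℕ) (h : a ≤ b) (C : TP m a →L[ℂ] TP m a) : TP m b →L[ℂ] TP m b :=
  Matrix.toEuclideanCLM (𝕜 := ℂ)
    (Matrix.of fun s t : Fin b → Fin m =>
      if (fun j : Fin (b - a) => s ⟨j.1, by have := j.isLt; omega⟩)
          = (fun j : Fin (b - a) => t ⟨j.1, by have := j.isLt; omega⟩)
        then matOf C (fun j : Fin a => s ⟨(b - a) + j.1, by have := j.isLt; omega⟩)
               (fun j : Fin a => t ⟨(b - a) + j.1, by have := j.isLt; omega⟩)
        else 0)

/-- Tensoring on the left with the basis vector `e_i` : the isometry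
`ξ ↦ e_i ⊗ ξ` from `(ℂ^m)^{⊗n}` to `(ℂ^m)^{⊗(n+1)}`. -/
def consCLM (m n : ℕ) (i : Fin m) : TP m n →L[ℂ] TP m (n + 1) :=
  LinearMap.toContinuousLinearMap <| Matrix.toEuclideanLin <|
    Matrix.of fun (s : Fin (n + 1) → Fin m) (t : Fin n → Fin m) =>
      if s 0 = i ∧ (fun j : Fin n => s j.succ) = t then 1 else 0

/-- Tensoring on the right with the basis vector `e_j` : the isometry
`ξ ↦ ξ ⊗ e_j` from `(ℂ^m)^{⊗n}` to `(ℂ^m)^{⊗(n+1)}`. -/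
def snocCLM (m n : ℕ) (j : Fin m) : TP m n →L[ℂ] TP m (n + 1) :=
  LinearMap.toContinuousLinearMap <| Matrix.toEuclideanLin <|
    Matrix.of fun (s : Fin (n + 1) → Fin m) (t : Fin n → Fin m) =>
      if s (Fin.last n) = j ∧ (fun k : Fin n => s k.castSucc) = t then 1 else 0

/-- The left creation operator `L_i = f_{n+1}(e_i ⊗ ·) : (ℂ^m)^{⊗n} → (ℂ^m)^{⊗(n+1)}`. -/
def Lop (m : ℕ) (A : Matrix (Fin m) (Fin m) ℂ) (n : ℕ) (i : Fin m) :
    TP m n →L[ℂ] TP m (n + 1) :=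
  fProj m A (n + 1) ∘L consCLM m n i

/-- The right creation operator `R_j = f_{n+1}(· ⊗ e_j) : (ℂ^m)^{⊗n} → (ℂ^m)^{⊗(n+1)}`. -/
def Rop (m : ℕ) (A : Matrix (Fin m) (Fin m) ℂ) (n : ℕ) (j : Fin m) :
    TP m n →L[ℂ] TP m (n + 1) :=
  fProj m A (n + 1) ∘L snocCLM m n j

/-- The left creation operator `L_i : H_n → H_{n+1}`, viewed as a map between
the fibers of the subproduct system. -/
def LopH (m : ℕ) (A : Matrix (Fin m) (Fin m) ℂ) (n : ℕ) (i : Fin m) :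
    Hsp m A n →L[ℂ] Hsp m A (n + 1) :=
  Submodule.orthogonalProjectionOnto (Hsp m A (n + 1)) ∘L consCLM m n i ∘L (Hsp m A n).subtypeL

/-- The right creation operator `R_j : H_n → H_{n+1}`, viewed as a map between
the fibers of the subproduct system. -/
def RopH (m : ℕ) (A : Matrix (Fin m) (Fin m) ℂ) (n : ℕ) (j : Fin m) :
    Hsp m A n →L[ℂ] Hsp m A (n + 1) :=
  Submodule.orthogonalProjectionOnto (Hsp m A (n + 1)) ∘L snocCLM m n j ∘L (Hsp m A n).subtypeL


/-! The vectors `x ⊗ p ⊗ y` spanning `J^{(n)}` are stable under `e_i ⊗ ·` and `· ⊗ e_j`, so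
`J = ⊕ J^{(n)}` is a two-sided ideal of the tensor algebra. Hence `f_{n+2}(e_i ⊗ f_{n+1} η)` and
`f_{n+2}((f_{n+1} η) ⊗ e_j)` do not see the projection `f_{n+1}`, and both sides of the claim
reduce to `f_{n+2}(e_i ⊗ ξ ⊗ e_j)`. -/

namespace Submodule

variable {𝕜 E F : Type*} [RCLike 𝕜] [NormedAddCommGroup E] [InnerProductSpace 𝕜 E]
  [NormedAddCommGroup F] [InnerProductSpace 𝕜 F]

theorem starProjection_orthogonal_apply_starProjection_orthogonal_of_le_comap {U : Submodule 𝕜 E}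
    {V : Submodule 𝕜 F} [U.HasOrthogonalProjection] [V.HasOrthogonalProjection]
    {T : E →L[𝕜] F} (hT : U ≤ V.comap (T : E →ₗ[𝕜] F)) (v : E) :
    Vᗮ.starProjection (T (Uᗮ.starProjection v)) = Vᗮ.starProjection (T v) := by
  have hU : v - Uᗮ.starProjection v ∈ U := by
    simpa only [orthogonal_orthogonal] using Uᗮ.sub_starProjection_mem_orthogonal v
  rw [eq_comm, ← sub_eq_zero, ← map_sub, ← map_sub, starProjection_apply_eq_zero_iff,
    orthogonal_orthogonal]
  exact hT hU

end Submodule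

section Creation

variable (m : ℕ)

lemma consCLM_apply (n : ℕ) (i : Fin m) (v : TP m n) (s : Fin (n + 1) → Fin m) :
    consCLM m n i v s = if s 0 = i then v (fun k => s k.succ) else 0 := by
  change ∑ t, (if s 0 = i ∧ (fun k : Fin n => s k.succ) = t then (1 : ℂ) else 0) * v t = _
  split_ifs with h <;> simp [h]

lemma snocCLM_apply (n : ℕ) (j : Fin m) (v : TP m n) (s : Fin (n + 1) → Fin m) :
    snocCLM m n j v s = if s (Fin.last n) = j then v (fun k => s k.castSucc) else 0 := by
  change ∑ t, (if s (Fin.last n) = j ∧ (fun k : Fin n => s k.castSucc) = t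
    then (1 : ℂ) else 0) * v t = _
  split_ifs with h <;> simp [h]

lemma consCLM_snocCLM (n : ℕ) (i j : Fin m) (ξ : TP m n) :
    consCLM m (n + 1) i (snocCLM m n j ξ) = snocCLM m (n + 1) j (consCLM m n i ξ) := by
  ext s
  simp only [consCLM_apply, snocCLM_apply, Fin.succ_last, Fin.castSucc_zero, Fin.succ_castSucc]
  by_cases hi : s 0 = i <;> simp [hi]

variable (A : Matrix (Fin m) (Fin m) ℂ)

lemma fProj_eq_starProjection (n : ℕ) : fProj m A n = (Jsp m A n)ᗮ.starProjection := rfl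

instance (n : ℕ) : (Jsp m A n).HasOrthogonalProjection :=
  .ofCompleteSpace _

lemma Jsp_le_comap_consCLM (n : ℕ) (i : Fin m) :
    Jsp m A n ≤ (Jsp m A (n + 1)).comap (consCLM m n i : TP m n →ₗ[ℂ] TP m (n + 1)) := by
  rw [Jsp, Submodule.span_le]
  rintro _ ⟨k, hk, x, y, rfl⟩
  refine Submodule.subset_span ⟨k + 1, by omega, consCLM m k i x,
    WithLp.toLp 2 fun t => y fun r => t ⟨r, by omega⟩, ?_⟩
  ext s
  simp only [ContinuousLinearMap.coe_coe, consCLM_apply, Fin.succ_mk, Fin.val_zero, Fin.mk_zero]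
  by_cases hi : s 0 = i
  · simp only [hi, if_true, Fin.val_succ]
    ring_nf
  · simp only [hi, if_false, zero_mul]

lemma Jsp_le_comap_snocCLM (n : ℕ) (j : Fin m) :
    Jsp m A n ≤ (Jsp m A (n + 1)).comap (snocCLM m n j : TP m n →ₗ[ℂ] TP m (n + 1)) := by
  rw [Jsp, Submodule.span_le]
  rintro _ ⟨k, hk, x, y, rfl⟩
  refine Submodule.subset_span ⟨k, by omega, x,
    WithLp.toLp 2 fun t => if t ⟨n - (k + 2), by omega⟩ = j
      then y fun r => t ⟨r, by omega⟩ else 0, ?_⟩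
  ext s
  have hlast : (⟨k + 2 + (n - (k + 2)), by omega⟩ : Fin (n + 1)) = Fin.last n :=
    Fin.ext (by simp only [Fin.val_last]; omega)
  simp only [ContinuousLinearMap.coe_coe, snocCLM_apply, Fin.val_mk, hlast]
  by_cases hj : s (Fin.last n) = j
  · simp only [hj, if_true, Fin.castSucc_mk]
  · simp only [hj, if_false, mul_zero]

end Creation

theorem statement6_general (m : ℕ) (A : Matrix (Fin m) (Fin m) ℂ)
    (n : ℕ) (i j : Fin m) (ξ : TP m n) :
    fProj m A (n + 2) (consCLM m (n + 1) i (fProj m A (n + 1) (snocCLM m n j ξ)))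
      = fProj m A (n + 2) (snocCLM m (n + 1) j (fProj m A (n + 1) (consCLM m n i ξ))) := by
  simp only [fProj_eq_starProjection]
  rw [Submodule.starProjection_orthogonal_apply_starProjection_orthogonal_of_le_comap
      (Jsp_le_comap_consCLM m A (n + 1) i),
    Submodule.starProjection_orthogonal_apply_starProjection_orthogonal_of_le_comap
      (Jsp_le_comap_snocCLM m A (n + 1) j),
    consCLM_snocCLM]

/-- `f_{n+2}(e_i ⊗ f_{n+1}(ξ ⊗ e_j)) = f_{n+2}(f_{n+1}(e_i ⊗ ξ) ⊗ e_j)`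
for all `ξ ∈ H_n`: left and right creation operators commute, `L_i R_j = R_j L_i`. -/
theorem statement6 (m : ℕ) (hm : 2 ≤ m) (A : Matrix (Fin m) (Fin m) ℂ)
    (hA : IsUnit A)
    (hAA : A * A.map (starRingEnd ℂ) ∈ Matrix.unitaryGroup (Fin m) ℂ)
    (n : ℕ) (i j : Fin m) (ξ : TP m n) (hξ : ξ ∈ Hsp m A n) :
    fProj m A (n + 2) (consCLM m (n + 1) i (fProj m A (n + 1) (snocCLM m n j ξ)))
      = fProj m A (n + 2) (snocCLM m (n + 1) j (fProj m A (n + 1) (consCLM m n i ξ))) :=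
  statement6_general m A n i j ξ
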